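/- arXiv:1702.01888 — 5 statements merged into one kernel-verified Lean document; each statement's English description precedes it below -/
import Mathlib

section
/- Let W be the symmetric group S_{n+1} with simple reflections s_1,...,s_n (s_i swaps i and i+1). Fix m,l with m ≤ l and n ≥ 2m+1. Let w_c = (s_n s_{n-1} ⋯ s_{m+2})(s_1 s_2 ⋯ s_m) s_{m+1}. Then for every k with 1 ≤ k ≤ m+1, the word (w_c)^k obtained by concatenating k copies of this expression is a reduced expression; in particular ℓ((w_c)^{m+1}) = n(m+1). -/
/-
Sending `sᵢ` to the transposition `(i, i+1)` defines a homomorphism from `W` to `S_{n+1}`, and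
right multiplication by an adjacent transposition changes the number of inversions by at most one,
so `ℓ(w)` is at least the number of inversions of the image of `w`. The image of `w_c` is the
`(n+1)`-cycle `0 → 1 → ⋯ → m → n → n-1 → ⋯ → m+1 → 0`; its `(m+1)`-st power sends `[0, m]`
decreasingly onto the top `m + 1` values, `[m+1, 2m+1]` decreasingly onto the bottom ones and the
rest increasingly in between, which gives `n(m+1)` inversions. So the `(m+1)`-fold word is reduced,
and with it every prefix, in particular every `k`-fold word.
-/

open Finset Equiv

namespace Equiv.Perm

variable {N : ℕ}

def inversions (σ : Perm (Fin N)) : Finset (Fin N × Fin N) :=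
  {p | p.1 < p.2 ∧ σ p.2 < σ p.1}

@[simp]
theorem mem_inversions {σ : Perm (Fin N)} {p : Fin N × Fin N} :
    p ∈ σ.inversions ↔ p.1 < p.2 ∧ σ p.2 < σ p.1 := by
  simp [inversions]

@[simp]
theorem inversions_one : inversions (1 : Perm (Fin N)) = ∅ := by
  ext p
  simpa using fun h : p.1 < p.2 => h.le

/-- Composing with `swap a (a + 1)` only reverses the relative order of `a` and `a + 1`. -/
theorem card_inversions_mul_swap_le (σ : Perm (Fin N)) {a b : Fin N} (hab : (a : ℕ) + 1 = b) :
    #(σ * swap a b).inversions ≤ #σ.inversions + 1 := by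
  have hsub : (σ * swap a b).inversions ⊆
      insert (a, b) (σ.inversions.image fun p => (swap a b p.1, swap a b p.2)) := by
    intro p hp
    rw [mem_inversions, mul_apply, mul_apply] at hp
    rcases eq_or_ne p (a, b) with rfl | hpab
    · exact mem_insert_self _ _
    refine mem_insert_of_mem (mem_image.2 ⟨(swap a b p.1, swap a b p.2), ?_, by simp⟩)
    refine mem_inversions.2 ⟨?_, hp.2⟩
    have hne : ¬(p.1 = a ∧ p.2 = b) := fun h => hpab (Prod.ext h.1 h.2)
    have := hp.1
    simp only [swap_apply_def, Fin.lt_def, Fin.ext_iff] at this hne ⊢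
    split_ifs <;> omega
  calc #(σ * swap a b).inversions ≤ #(σ.inversions.image _) + 1 :=
        (card_le_card hsub).trans (card_insert_le _ _)
    _ ≤ #σ.inversions + 1 := Nat.add_le_add_right card_image_le 1

end Equiv.Perm

namespace CoxeterSystem

variable {B W G : Type*} [Group W] [Monoid G] {M : CoxeterMatrix B} (cs : CoxeterSystem M W)

theorem le_length_of_map_mul_simple_le (φ : W →* G) (c : G → ℕ) (h1 : c 1 = 0)
    (hs : ∀ g i, c (g * φ (cs.simple i)) ≤ c g + 1) (w : W) : c (φ w) ≤ cs.length w := by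
  have hword (ω : List B) : c (φ (cs.wordProd ω)) ≤ ω.length := by
    induction ω using List.reverseRecOn with
    | nil => simp [h1]
    | append_singleton ω i ih =>
      rw [cs.wordProd_append, cs.wordProd_singleton, map_mul, List.length_append,
        List.length_singleton]
      exact (hs _ i).trans (Nat.add_le_add_right ih 1)
  obtain ⟨ω, hω, rfl⟩ := cs.exists_isReduced w
  exact hω.eq ▸ hword ω

theorem lift_apply_wordProd {f : B → G} (hf : M.IsLiftable f) (ω : List B) :
    cs.lift ⟨f, hf⟩ (cs.wordProd ω) = (ω.map f).prod := by
  simp [wordProd, map_list_prod, Function.comp_def]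

end CoxeterSystem

namespace CoxeterMatrix

variable {n : ℕ}

def adjSwap (i : Fin n) : Perm (Fin (n + 1)) := swap i.castSucc i.succ

theorem isLiftable_A_adjSwap (n : ℕ) : (CoxeterMatrix.A n).IsLiftable adjSwap := by
  intro i j
  change (adjSwap i * adjSwap j) ^ (if i = j then 1
    else if (j : ℕ) + 1 = i ∨ (i : ℕ) + 1 = j then 3 else 2) = 1
  simp only [adjSwap, Fin.ext_iff]
  split_ifs with hij hadj
  · simp [Fin.ext hij]
  · have h3 : ∀ a b c : Fin (n + 1), a ≠ b → a ≠ c → b ≠ c → (swap a b * swap a c) ^ 3 = 1 :=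
      fun a b c hab hac hbc => by
        rw [← (Perm.isThreeCycle_swap_mul_swap_same hab hac hbc).orderOf, pow_orderOf_eq_one]
    rcases hadj with h | h
    · rw [swap_comm j.castSucc, show j.succ = i.castSucc from Fin.ext (by simp [h])]
      apply h3 <;> simp [Fin.ext_iff] <;> omega
    · rw [swap_comm i.castSucc, show i.succ = j.castSucc from Fin.ext (by simp [h])]
      apply h3 <;> simp [Fin.ext_iff] <;> omega
  · have hdisj : Perm.Disjoint (swap i.castSucc i.succ) (swap j.castSucc j.succ) := by
      apply Perm.disjoint_swap_swap
      simp [Fin.ext_iff]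
      omega
    rw [hdisj.commute.mul_pow, pow_two, pow_two, swap_mul_self, swap_mul_self, one_mul]

theorem card_inversions_prod_map_adjSwap_le_length {W : Type*} [Group W]
    (cs : CoxeterSystem (CoxeterMatrix.A n) W) (ω : List (Fin n)) :
    #((ω.map adjSwap).prod).inversions ≤ cs.length (cs.wordProd ω) := by
  rw [← cs.lift_apply_wordProd (isLiftable_A_adjSwap n)]
  refine cs.le_length_of_map_mul_simple_le _ (fun σ : Perm (Fin (n + 1)) => #σ.inversions)
    (by simp) (fun σ i => ?_) _
  rw [cs.lift_apply_simple]
  exact σ.card_inversions_mul_swap_le (Fin.val_succ i).symm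

theorem adjSwap_apply_val (i : Fin n) (x : Fin (n + 1)) :
    (adjSwap i x : ℕ) =
      if (x : ℕ) = i then (i : ℕ) + 1 else if (x : ℕ) = (i : ℕ) + 1 then (i : ℕ) else x := by
  rw [adjSwap, swap_apply_def]
  split_ifs <;> simp_all [Fin.ext_iff]

theorem prod_ofFn_adjSwap_apply_of_ascending {d : ℕ} (F : Fin d → Fin n)
    (hF : ∀ j, (F j : ℕ) = j) (x : Fin (n + 1)) :
    ((List.ofFn fun j => adjSwap (F j)).prod x : ℕ) =
      if (x : ℕ) = d then 0 else if (x : ℕ) < d then (x : ℕ) + 1 else x := by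
  induction d generalizing x with
  | zero => simp
  | succ d ih =>
    rw [List.ofFn_succ', List.prod_concat, Perm.mul_apply,
      ih (fun j => F j.castSucc) (fun j => by simp [hF]), adjSwap_apply_val, hF]
    simp only [Fin.val_last]
    split_ifs <;> omega

theorem prod_ofFn_adjSwap_apply_of_descending {d : ℕ} (hd : d ≤ n) (F : Fin d → Fin n)
    (hF : ∀ j, (F j : ℕ) = n - 1 - j) (x : Fin (n + 1)) :
    ((List.ofFn fun j => adjSwap (F j)).prod x : ℕ) =
      if (x : ℕ) = n - d then n else if n - d < (x : ℕ) then (x : ℕ) - 1 else x := by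
  induction d generalizing x with
  | zero =>
    have := x.isLt
    simp only [List.ofFn_zero, List.prod_nil, Perm.one_apply, Nat.sub_zero]
    split_ifs <;> omega
  | succ d ih =>
    rw [List.ofFn_succ', List.prod_concat, Perm.mul_apply,
      ih (by omega) (fun j => F j.castSucc) (fun j => by simp [hF]), adjSwap_apply_val, hF]
    simp only [Fin.val_last]
    split_ifs <;> omega

end CoxeterMatrix

namespace CoxeterMatrix

variable {n m : ℕ}

def wcWord (n m : ℕ) (hmn : m < n) : List (Fin n) :=
  (List.ofFn fun j : Fin (n - m - 1) => (⟨n - 1 - (j : ℕ), by omega⟩ : Fin n)) ++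
    (List.ofFn fun j : Fin m => (⟨(j : ℕ), by omega⟩ : Fin n)) ++ [(⟨m, by omega⟩ : Fin n)]

/-- `w_c` acts on `{0, …, n}` as the `(n + 1)`-cycle `0 → 1 → ⋯ → m → n → n - 1 → ⋯ → m + 1 → 0`,
and for `r ≤ m + 1` the value `wcPowVal n m r x` is `x` moved `r` steps along it. -/
def wcPowVal (n m r x : ℕ) : ℕ :=
  if x + r ≤ m then x + r
  else if x ≤ m then n + m + 1 - x - r
  else if x ≤ m + r then m + r - x
  else x - r

theorem wcPowVal_zero (x : ℕ) : wcPowVal n m 0 x = x := by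
  unfold wcPowVal; split_ifs <;> omega

theorem wcPowVal_wcPowVal_one {r x : ℕ} (hn : 2 * m + 1 ≤ n) (hr : r ≤ m) (hx : x ≤ n) :
    wcPowVal n m r (wcPowVal n m 1 x) = wcPowVal n m (r + 1) x := by
  unfold wcPowVal; split_ifs <;> omega

theorem prod_map_adjSwap_wcWord_apply (hmn : m < n) (x : Fin (n + 1)) :
    (((wcWord n m hmn).map adjSwap).prod x : ℕ) = wcPowVal n m 1 x := by
  have hx := x.isLt
  simp only [wcWord, List.map_append, List.prod_append, Perm.mul_apply, List.map_ofFn,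
    Function.comp_def, List.map_singleton, List.prod_singleton]
  rw [prod_ofFn_adjSwap_apply_of_descending (by omega) _ (fun _ => rfl),
    prod_ofFn_adjSwap_apply_of_ascending (fun j : Fin m => (⟨j, by omega⟩ : Fin n)) (fun _ => rfl),
    adjSwap_apply_val]
  unfold wcPowVal
  dsimp only
  split_ifs <;> omega

theorem pow_apply_eq_wcPowVal (hn : 2 * m + 1 ≤ n) {σ : Perm (Fin (n + 1))}
    (hσ : ∀ x : Fin (n + 1), (σ x : ℕ) = wcPowVal n m 1 x) {r : ℕ} (hr : r ≤ m + 1)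
    (x : Fin (n + 1)) : ((σ ^ r) x : ℕ) = wcPowVal n m r x := by
  induction r generalizing x with
  | zero => simp [wcPowVal_zero]
  | succ r ih =>
    rw [pow_succ, Perm.mul_apply, ih (by omega), hσ]
    exact wcPowVal_wcPowVal_one hn (by omega) (by omega)

/-- Row `i` of `Fin (m + 1) × Fin n` is sent to the `n - i` inversions `(i, y)` with `i < y` and
the `i` inversions `(m + 1 + a, m + 1 + i)` with `a < i`. -/
theorem le_card_inversions_of_apply_eq_wcPowVal (hn : 2 * m + 1 ≤ n)
    {σ : Perm (Fin (n + 1))} (hσ : ∀ x : Fin (n + 1), (σ x : ℕ) = wcPowVal n m (m + 1) x) :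
    (m + 1) * n ≤ #σ.inversions := by
  let e (p : Fin (m + 1) × Fin n) : Fin (n + 1) × Fin (n + 1) :=
    if h : (p.1 : ℕ) + p.2 < n then (⟨p.1, by omega⟩, ⟨p.1 + 1 + p.2, by omega⟩)
    else (⟨m + 1 + (p.1 + p.2 - n), by have := p.1.isLt; have := p.2.isLt; omega⟩,
      ⟨m + 1 + p.1, by have := p.1.isLt; omega⟩)
  have he_mem (p) : e p ∈ σ.inversions := by
    have := p.1.isLt
    rw [Perm.mem_inversions, Fin.lt_def, Fin.lt_def, hσ, hσ]
    unfold e wcPowVal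
    split_ifs <;> dsimp only at * <;> omega
  have he_inj : Function.Injective e := by
    intro p q hpq
    have := p.1.isLt; have := p.2.isLt; have := q.1.isLt; have := q.2.isLt
    unfold e at hpq
    split_ifs at hpq <;>
    · simp only [Prod.mk.injEq, Fin.mk.injEq] at hpq
      ext <;> omega
  simpa using card_le_card_of_injOn (s := univ) e (fun p _ => he_mem p) he_inj.injOn

end CoxeterMatrix

theorem reduced_power_of_wc (n m : ℕ) (hn : 2 * m + 1 ≤ n)
    {W : Type*} [Group W] (cs : CoxeterSystem (CoxeterMatrix.Aₙ n) W)
    (wcWord : List (Fin n))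
    (hword : wcWord =
      (List.ofFn fun j : Fin (n - m - 1) => (⟨n - 1 - (j : ℕ), by omega⟩ : Fin n)) ++
      (List.ofFn fun j : Fin m => (⟨(j : ℕ), by omega⟩ : Fin n)) ++
      [(⟨m, by omega⟩ : Fin n)]) :
    (∀ k : ℕ, 1 ≤ k → k ≤ m + 1 →
        cs.IsReduced (List.flatten (List.replicate k wcWord))) ∧
    cs.length (cs.wordProd (List.flatten (List.replicate (m + 1) wcWord))) = n * (m + 1) := by
  change wcWord = CoxeterMatrix.wcWord n m (by omega) at hword
  have hlength (k : ℕ) : (List.replicate k wcWord).flatten.length = k * n := by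
    simp [hword, CoxeterMatrix.wcWord]
    omega
  have hreduced : cs.IsReduced (List.replicate (m + 1) wcWord).flatten := by
    refine le_antisymm (cs.length_wordProd_le _) ?_
    rw [hlength]
    refine (CoxeterMatrix.le_card_inversions_of_apply_eq_wcPowVal hn fun x => ?_).trans
      (CoxeterMatrix.card_inversions_prod_map_adjSwap_le_length cs _)
    rw [List.map_flatten, List.map_replicate, List.prod_flatten, List.map_replicate,
      List.prod_replicate, hword]
    exact CoxeterMatrix.pow_apply_eq_wcPowVal hn
      (CoxeterMatrix.prod_map_adjSwap_wcWord_apply _) le_rfl x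
  refine ⟨fun k _ hk => ?_, by rw [hreduced.eq, hlength, mul_comm]⟩
  have := hreduced.take (k * n)
  rwa [show m + 1 = k + (m + 1 - k) by omega, List.replicate_add, List.flatten_append,
    List.take_left' (hlength k)] at this
end

section
/- Let w_c ∈ S_{n+1} be the permutation defined by w_c(i) = i+1 for 1 ≤ i ≤ m, w_c(m+1) = n+1, w_c(m+2) = 1, and w_c(i) = i−1 for m+3 ≤ i ≤ n+1 (where m ≤ l = n−m−1, n ≥ 2m+1). Then the (m+1)-st power w = w_c^{m+1} satisfies: w(i) = n+2−i for 1 ≤ i ≤ m+1, w(i) = 2m+3−i for m+2 ≤ i ≤ 2m+2, and w(i) = i−(m+1) for 2m+3 ≤ i ≤ n+1. -/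
/-- Let `w_c ∈ S_{n+1}` be the permutation given (in `1`-based letters) by
`w_c(i) = i+1` for `1 ≤ i ≤ m`, `w_c(m+1) = n+1`, `w_c(m+2) = 1`, `w_c(i) = i-1` for
`m+3 ≤ i ≤ n+1` (where `m ≤ l = n - m - 1`, i.e. `n ≥ 2m+1`).  Then `w = w_c^{m+1}`
satisfies `w(i) = n+2-i` for `1 ≤ i ≤ m+1`, `w(i) = 2m+3-i` for `m+2 ≤ i ≤ 2m+2`, and
`w(i) = i-(m+1)` for `2m+3 ≤ i ≤ n+1`.  (Here letters are `0`-indexed via `Fin (n+1)`,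
so the `1`-based letter `i` is `i - 1 : Fin (n+1)`.) -/
theorem power_of_wc_formula (n m : ℕ) (hn : 2 * m + 1 ≤ n)
    (wc : Equiv.Perm (Fin (n + 1)))
    (h1 : ∀ i : Fin (n + 1), (i : ℕ) < m → (wc i : ℕ) = (i : ℕ) + 1)
    (h2 : ∀ i : Fin (n + 1), (i : ℕ) = m → (wc i : ℕ) = n)
    (h3 : ∀ i : Fin (n + 1), (i : ℕ) = m + 1 → (wc i : ℕ) = 0)
    (h4 : ∀ i : Fin (n + 1), m + 2 ≤ (i : ℕ) → (wc i : ℕ) = (i : ℕ) - 1) :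
    (∀ i : Fin (n + 1), (i : ℕ) ≤ m → ((wc ^ (m + 1)) i : ℕ) = n - (i : ℕ)) ∧
    (∀ i : Fin (n + 1), m + 1 ≤ (i : ℕ) → (i : ℕ) ≤ 2 * m + 1 →
      ((wc ^ (m + 1)) i : ℕ) = 2 * m + 1 - (i : ℕ)) ∧
    (∀ i : Fin (n + 1), 2 * m + 2 ≤ (i : ℕ) →
      ((wc ^ (m + 1)) i : ℕ) = (i : ℕ) - (m + 1)) := by
  have key : ∀ k, k ≤ m + 1 → ∀ i : Fin (n + 1),
      ((i : ℕ) + k ≤ m → ((wc ^ k) i : ℕ) = (i : ℕ) + k) ∧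
      ((i : ℕ) ≤ m → m < (i : ℕ) + k →
        ((wc ^ k) i : ℕ) = n + m + 1 - ((i : ℕ) + k)) ∧
      (m + 1 + k ≤ (i : ℕ) → ((wc ^ k) i : ℕ) = (i : ℕ) - k) ∧
      (m + 1 ≤ (i : ℕ) → (i : ℕ) ≤ m + k → ((wc ^ k) i : ℕ) = m + k - (i : ℕ)) := by
    intro k
    induction k with
    | zero =>
      intro _ i
      simp only [pow_zero, Equiv.Perm.one_apply]
      omega
    | succ k ih =>
      intro hk i
      obtain ⟨ia, ib, ic, id⟩ := ih (by omega) i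
      have hs : ((wc ^ (k + 1)) i : ℕ) = (wc ((wc ^ k) i) : ℕ) := by
        rw [pow_succ', Equiv.Perm.mul_apply]
      refine ⟨?_, ?_, ?_, ?_⟩
      · intro h
        have hj := ia (by omega)
        rw [hs, h1 _ (by omega)]
        omega
      · intro h h'
        by_cases hc : (i : ℕ) + k ≤ m
        · have hj := ia hc
          rw [hs, h2 _ (by omega)]
          omega
        · have hj := ib h (by omega)
          rw [hs, h4 _ (by omega)]
          omega
      · intro h
        have hj := ic (by omega)
        rw [hs, h4 _ (by omega)]
        omega
      · intro h h'
        by_cases hc : m + 1 + k ≤ (i : ℕ)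
        · have hj := ic hc
          rw [hs, h3 _ (by omega)]
          omega
        · have hj := id h (by omega)
          rw [hs, h1 _ (by omega)]
          omega
  refine ⟨?_, ?_, ?_⟩
  · intro i hi
    have := (key (m + 1) le_rfl i).2.1 hi (by omega)
    omega
  · intro i h h'
    have := (key (m + 1) le_rfl i).2.2.2 h (by omega)
    omega
  · intro i h
    have := (key (m + 1) le_rfl i).2.2.1 (by omega)
    omega
end

section
/- Let w ∈ S_{n+1} be given by w(i) = n+2−i for 1 ≤ i ≤ m+1, w(i) = 2m+3−i for m+2 ≤ i ≤ 2m+2, and w(i) = i−(m+1) for 2m+3 ≤ i ≤ n+1 (with n ≥ 2m+1). Then the number of inversions of w (pairs i < j with w(i) > w(j)) equals n(m+1). -/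
lemma sum_sub_helper (c k : ℕ) (h : k ≤ c + 1) :
    (∑ i ∈ Finset.range k, (c - i)) + ∑ i ∈ Finset.range k, i = k * c := by
  induction k with
  | zero => simp
  | succ k ih =>
      rw [Finset.sum_range_succ, Finset.sum_range_succ, Nat.succ_mul]
      have := ih (by omega)
      omega

/-- Let `w ∈ S_{n+1}` be given (in `1`-based letters) by `w(i) = n+2-i` for
`1 ≤ i ≤ m+1`, `w(i) = 2m+3-i` for `m+2 ≤ i ≤ 2m+2`, and `w(i) = i-(m+1)` for
`2m+3 ≤ i ≤ n+1` (with `n ≥ 2m+1`).  Then the number of inversions of `w` (pairs `i < j`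
with `w(i) > w(j)`) equals `n(m+1)`.  (Letters are `0`-indexed via `Fin (n+1)`.) -/
theorem inversions_of_w (n m : ℕ) (hn : 2 * m + 1 ≤ n)
    (w : Equiv.Perm (Fin (n + 1)))
    (h1 : ∀ i : Fin (n + 1), (i : ℕ) ≤ m → (w i : ℕ) = n - (i : ℕ))
    (h2 : ∀ i : Fin (n + 1), m + 1 ≤ (i : ℕ) → (i : ℕ) ≤ 2 * m + 1 →
      (w i : ℕ) = 2 * m + 1 - (i : ℕ))
    (h3 : ∀ i : Fin (n + 1), 2 * m + 2 ≤ (i : ℕ) → (w i : ℕ) = (i : ℕ) - (m + 1)) :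
    (Finset.univ.filter
      (fun p : Fin (n + 1) × Fin (n + 1) => p.1 < p.2 ∧ w p.2 < w p.1)).card
      = n * (m + 1) := by
  classical
  have hstep : (Finset.univ.filter
      (fun p : Fin (n + 1) × Fin (n + 1) => p.1 < p.2 ∧ w p.2 < w p.1))
      = Finset.univ.filter (fun p : Fin (n + 1) × Fin (n + 1) =>
          (p.1 : ℕ) < (p.2 : ℕ) ∧ ((p.1 : ℕ) ≤ m ∨
            ((p.1 : ℕ) ≤ 2 * m + 1 ∧ (p.2 : ℕ) ≤ 2 * m + 1))) := by
    apply Finset.filter_congr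
    rintro ⟨i, j⟩ -
    simp only [Fin.lt_def]
    apply and_congr_right
    intro hij
    have hi := i.isLt
    have hj := j.isLt
    rcases le_or_gt (i : ℕ) m with hiA | hiA
    · have hwi := h1 i hiA
      rcases le_or_gt (j : ℕ) m with hjA | hjA
      · have hwj := h1 j hjA; omega
      · rcases le_or_gt (j : ℕ) (2 * m + 1) with hjB | hjB
        · have hwj := h2 j (by omega) hjB; omega
        · have hwj := h3 j (by omega); omega
    · rcases le_or_gt (i : ℕ) (2 * m + 1) with hiB | hiB
      · have hwi := h2 i (by omega) hiB
        rcases le_or_gt (j : ℕ) (2 * m + 1) with hjB | hjB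
        · have hwj := h2 j (by omega) hjB; omega
        · have hwj := h3 j (by omega); omega
      · have hwi := h3 i (by omega)
        have hwj := h3 j (by omega); omega
  rw [hstep, Finset.card_filter]
  rw [Fintype.sum_prod_type]
  have inner : ∀ i : Fin (n + 1),
      (∑ j : Fin (n + 1), if (i : ℕ) < (j : ℕ) ∧ ((i : ℕ) ≤ m ∨
          ((i : ℕ) ≤ 2 * m + 1 ∧ (j : ℕ) ≤ 2 * m + 1)) then 1 else 0)
      = (if (i : ℕ) ≤ m then n - (i : ℕ) else
          if (i : ℕ) ≤ 2 * m + 1 then 2 * m + 1 - (i : ℕ) else 0) := by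
    intro i
    rw [Fin.sum_univ_eq_sum_range (fun j => if (i : ℕ) < j ∧ ((i : ℕ) ≤ m ∨
        ((i : ℕ) ≤ 2 * m + 1 ∧ j ≤ 2 * m + 1)) then 1 else 0)]
    rw [← Finset.card_filter]
    rcases le_or_gt (i : ℕ) m with hiA | hiA
    · have hset : (Finset.range (n + 1)).filter (fun j => (i : ℕ) < j ∧ ((i : ℕ) ≤ m ∨
          ((i : ℕ) ≤ 2 * m + 1 ∧ j ≤ 2 * m + 1))) = Finset.Ico ((i : ℕ) + 1) (n + 1) := by
        ext j
        simp only [Finset.mem_filter, Finset.mem_range, Finset.mem_Ico]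
        omega
      rw [hset, Nat.card_Ico, if_pos hiA]
      omega
    · rcases le_or_gt (i : ℕ) (2 * m + 1) with hiB | hiB
      · have hset : (Finset.range (n + 1)).filter (fun j => (i : ℕ) < j ∧ ((i : ℕ) ≤ m ∨
            ((i : ℕ) ≤ 2 * m + 1 ∧ j ≤ 2 * m + 1))) = Finset.Ico ((i : ℕ) + 1) (2 * m + 2) := by
          ext j
          simp only [Finset.mem_filter, Finset.mem_range, Finset.mem_Ico]
          omega
        rw [hset, Nat.card_Ico, if_neg (by omega), if_pos hiB]
        omega
      · have hset : (Finset.range (n + 1)).filter (fun j => (i : ℕ) < j ∧ ((i : ℕ) ≤ m ∨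
            ((i : ℕ) ≤ 2 * m + 1 ∧ j ≤ 2 * m + 1))) = ∅ := by
          ext j
          simp only [Finset.mem_filter, Finset.mem_range, Finset.notMem_empty, iff_false]
          omega
        rw [hset, Finset.card_empty, if_neg (by omega), if_neg (by omega)]
  rw [Finset.sum_congr rfl (fun i _ => inner i)]
  rw [Fin.sum_univ_eq_sum_range (fun a => if a ≤ m then n - a else
      if a ≤ 2 * m + 1 then 2 * m + 1 - a else 0)]
  -- split the sum
  rw [Finset.range_eq_Ico, ← Finset.sum_Ico_consecutive _ (Nat.zero_le (2 * m + 2)) (by omega : 2 * m + 2 ≤ n + 1)]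
  have hC : (∑ a ∈ Finset.Ico (2 * m + 2) (n + 1), if a ≤ m then n - a else
      if a ≤ 2 * m + 1 then 2 * m + 1 - a else 0) = 0 := by
    apply Finset.sum_eq_zero
    intro a ha
    simp only [Finset.mem_Ico] at ha
    rw [if_neg (by omega), if_neg (by omega)]
  rw [hC, add_zero]
  rw [← Finset.sum_Ico_consecutive _ (Nat.zero_le (m + 1)) (by omega : m + 1 ≤ 2 * m + 2)]
  have hA : (∑ a ∈ Finset.Ico 0 (m + 1), if a ≤ m then n - a else
      if a ≤ 2 * m + 1 then 2 * m + 1 - a else 0) = ∑ a ∈ Finset.range (m + 1), (n - a) := by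
    rw [← Finset.range_eq_Ico]
    apply Finset.sum_congr rfl
    intro a ha
    simp only [Finset.mem_range] at ha
    rw [if_pos (by omega)]
  have hB : (∑ a ∈ Finset.Ico (m + 1) (2 * m + 2), if a ≤ m then n - a else
      if a ≤ 2 * m + 1 then 2 * m + 1 - a else 0) = ∑ a ∈ Finset.range (m + 1), (m - a) := by
    rw [Finset.sum_Ico_eq_sum_range]
    have : 2 * m + 2 - (m + 1) = m + 1 := by omega
    rw [this]
    apply Finset.sum_congr rfl
    intro a ha
    simp only [Finset.mem_range] at ha
    rw [if_neg (by omega), if_pos (by omega)]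
    omega
  rw [hA, hB]
  have e1 := sum_sub_helper n (m + 1) (by omega)
  have e2 := sum_sub_helper m (m + 1) (by omega)
  have e3 : (∑ i ∈ Finset.range (m + 1), i) * 2 = (m + 1) * m := by
    rw [Finset.sum_range_id_mul_two]
    simp
  have hmn : (m + 1) * n = n * (m + 1) := Nat.mul_comm _ _
  have hmm : (m + 1) * m = m * (m + 1) := Nat.mul_comm _ _
  omega
end

section
/- Let (W,S) be a Coxeter system, J ⊆ S, W_J the standard parabolic subgroup generated by J, and w_J its longest element (W_J finite). For w ∈ W with ℓ(w w_J) = ℓ(w) + ℓ(w_J), if α is a positive root such that w_J w^{-1}(α) is positive, then y w^{-1}(α) is positive for every y ∈ W_J. -/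
/-!
Tits' sign representation of `W` on `W × ZMod 2` shows that the parity of the number of
occurrences of `t` in the right inversion sequence of a word depends only on the product `w` of
the word. This parity `p(w, t)` (`invParity`) is `1` exactly when `t` is a right inversion of
`w`, and it is a cocycle: `p(ab, t) = p(b, t) + p(a, b t b⁻¹)`. Consequently right inversions of
elements of `W_J` lie in `W_J`, while every reflection of `W_J` is a right inversion of `w_J` and
of `w_J⁻¹`; and right inversions of `b` remain right inversions of `ab` when
`ℓ(ab) = ℓ(a) + ℓ(b)`.

Put `r = w⁻¹ t w`. If `r ∈ W_J`, the hypothesis on `w_J w⁻¹` makes `t` a right inversion of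
`w⁻¹`, hence of `w_J⁻¹ w⁻¹`, which the cocycle at `r` forbids. If `r ∉ W_J`, neither `w_J` nor
`y` inverts `r`, so `p(y w⁻¹, t) = p(w⁻¹, t) = p(w_J w⁻¹, t) = 0`.
-/

open List

theorem List.even_count_of_getElem_add_eq {α : Type*} [BEq α] {L : List α} {n : ℕ}
    (hlen : L.length = 2 * n) (hper : ∀ k (hk : k < n), L[k + n] = L[k]) (a : α) :
    Even (L.count a) := by
  have hdrop : L.drop n = L.take n :=
    ext_getElem (by simp; omega) fun k _ hk => by
      simpa [add_comm] using hper k (by simp at hk; omega)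
  rw [← take_append_drop n L, count_append, hdrop]
  exact ⟨_, rfl⟩

namespace CoxeterSystem

theorem prod_map_alternatingWord_two_mul {B G : Type*} [Monoid G] (f : B → G) (i j : B)
    (m : ℕ) : ((alternatingWord i j (2 * m)).map f).prod = (f i * f j) ^ m := by
  induction m with
  | zero => simp [alternatingWord]
  | succ m ih =>
    rw [show 2 * (m + 1) = 2 * m + 1 + 1 by ring, alternatingWord_succ', alternatingWord_succ']
    simp [ih, pow_succ', mul_assoc, parity_simps]

variable {B W : Type*} [Group W] {M : CoxeterMatrix B} (cs : CoxeterSystem M W)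

local prefix:100 "s " => cs.simple
local prefix:100 "π " => cs.wordProd
local prefix:100 "ℓ " => cs.length
local prefix:100 "ris " => cs.rightInvSeq
local prefix:100 "lis " => cs.leftInvSeq

theorem leftInvSeq_eq_map_rightInvSeq (ω : List B) :
    lis ω = (ris ω).map (MulAut.conj (π ω)) := by
  induction ω with
  | nil => simp
  | cons i ω ih =>
    simp only [leftInvSeq, rightInvSeq, ih, map_cons, map_map, wordProd_cons]
    congr 1
    · simp [mul_assoc]
    · refine map_congr_left fun x _ => ?_
      simp [mul_assoc]

theorem wordProd_alternatingWord_two_mul_eq_one (i j : B) :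
    π (alternatingWord i j (2 * M i j)) = 1 := by
  simp [prod_alternatingWord_eq_mul_pow]

section SignRepresentation

variable [DecidableEq W]

theorem even_count_rightInvSeq_alternatingWord (i j : B) (t : W) :
    Even ((ris (alternatingWord i j (2 * M i j))).count t) := by
  have hlis : lis (alternatingWord i j (2 * M i j)) = ris (alternatingWord i j (2 * M i j)) := by
    simpa [wordProd_alternatingWord_two_mul_eq_one] using
      cs.leftInvSeq_eq_map_rightInvSeq (alternatingWord i j (2 * M i j))
  rw [← hlis]
  refine List.even_count_of_getElem_add_eq (n := M i j) (by simp) (fun k hk => ?_) t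
  rw [getElem_leftInvSeq_alternatingWord _ _ _ _ _ (by omega),
    getElem_leftInvSeq_alternatingWord _ _ _ _ _ (by omega)]
  simp [prod_alternatingWord_eq_mul_pow, Nat.mul_add_div, pow_add, parity_simps]

/-- Björner–Brenti's action of `s i` on `T × {±1}`, extended to all of `W`, with `{±1}` written
additively as `ZMod 2`. -/
noncomputable def reflSignPerm (i : B) : Equiv.Perm (W × ZMod 2) :=
  Function.Involutive.toPerm (fun p => (s i * p.1 * s i, p.2 + if p.1 = s i then 1 else 0))
    fun ⟨t, e⟩ => by
      have hconj : s i * t * s i = s i ↔ t = s i :=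
        ⟨fun h => by simpa [mul_assoc] using congrArg (fun x => s i * x * s i) h,
          fun h => by simp [h]⟩
      refine Prod.ext ?_ ?_
      · simp [mul_assoc]
      · simp only [hconj, add_assoc, CharTwo.add_self_eq_zero, add_zero]

theorem reflSignPerm_apply (i : B) (t : W) (e : ZMod 2) :
    cs.reflSignPerm i (t, e) = (s i * t * s i, e + if t = s i then 1 else 0) := rfl

theorem prod_map_reflSignPerm_apply (ω : List B) (t : W) (e : ZMod 2) :
    (ω.map cs.reflSignPerm).prod (t, e) = (π ω * t * (π ω)⁻¹, e + (ris ω).count t) := by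
  induction ω with
  | nil => simp
  | cons i ω ih =>
    have hcond : π ω * t * (π ω)⁻¹ = s i ↔ (π ω)⁻¹ * s i * π ω = t := by
      constructor <;> intro h <;> rw [← h] <;> group
    simp only [map_cons, prod_cons, Equiv.Perm.mul_apply, ih, reflSignPerm_apply, rightInvSeq,
      count_cons, wordProd_cons, hcond, beq_iff_eq]
    refine Prod.ext ?_ ?_
    · simp [mul_assoc]
    · push_cast
      ring

theorem isLiftable_reflSignPerm : M.IsLiftable cs.reflSignPerm := fun i j => by
  ext ⟨t, e⟩ : 1
  rw [← prod_map_alternatingWord_two_mul, prod_map_reflSignPerm_apply,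
    wordProd_alternatingWord_two_mul_eq_one,
    (cs.even_count_rightInvSeq_alternatingWord i j t).natCast_zmod_two]
  simp

noncomputable def reflSignRep : W →* Equiv.Perm (W × ZMod 2) :=
  cs.lift ⟨cs.reflSignPerm, cs.isLiftable_reflSignPerm⟩

noncomputable def invParity (w t : W) : ZMod 2 := (cs.reflSignRep w (t, 0)).2

theorem reflSignRep_wordProd_apply (ω : List B) (t : W) (e : ZMod 2) :
    cs.reflSignRep (π ω) (t, e) = (π ω * t * (π ω)⁻¹, e + (ris ω).count t) := by
  rw [← prod_map_reflSignPerm_apply, reflSignRep, wordProd, map_list_prod, map_map]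
  congr 3
  funext i
  exact cs.lift_apply_simple cs.isLiftable_reflSignPerm i

theorem invParity_wordProd (ω : List B) (t : W) : cs.invParity (π ω) t = (ris ω).count t := by
  simp [invParity, reflSignRep_wordProd_apply]

theorem reflSignRep_apply (w t : W) (e : ZMod 2) :
    cs.reflSignRep w (t, e) = (w * t * w⁻¹, e + cs.invParity w t) := by
  obtain ⟨ω, rfl⟩ := cs.wordProd_surjective w
  rw [reflSignRep_wordProd_apply, invParity_wordProd]

theorem invParity_mul (a b t : W) :
    cs.invParity (a * b) t = cs.invParity b t + cs.invParity a (b * t * b⁻¹) := by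
  rw [invParity, map_mul, Equiv.Perm.mul_apply, reflSignRep_apply, reflSignRep_apply, zero_add]

theorem invParity_one (t : W) : cs.invParity 1 t = 0 := by
  simp [invParity]

theorem invParity_simple_self (i : B) : cs.invParity (s i) (s i) = 1 := by
  simpa using cs.invParity_wordProd [i] (s i)

theorem IsReflection.invParity_self {t : W} (ht : cs.IsReflection t) :
    cs.invParity t t = 1 := by
  obtain ⟨v, i, rfl⟩ := ht
  have hconj : v⁻¹ * (v * s i * v⁻¹) * v⁻¹⁻¹ = s i := by group
  have hcancel := cs.invParity_mul v v⁻¹ (v * s i * v⁻¹)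
  rw [mul_inv_cancel, invParity_one, hconj] at hcancel
  rw [invParity_mul, invParity_mul, hconj, show s i * s i * (s i)⁻¹ = s i by group,
    invParity_simple_self]
  linear_combination -hcancel

theorem isRightInversion_of_invParity_eq_one {w t : W} (h : cs.invParity w t = 1) :
    cs.IsRightInversion w t := by
  obtain ⟨ω, hω, rfl⟩ := cs.exists_isReduced w
  rw [invParity_wordProd] at h
  refine cs.isRightInversion_of_mem_rightInvSeq hω (count_pos_iff.1 (Nat.pos_of_ne_zero ?_))
  rintro h0
  simp [h0] at h

theorem isRightInversion_iff_invParity_eq_one {w t : W} (ht : cs.IsReflection t) :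
    cs.IsRightInversion w t ↔ cs.invParity w t = 1 := by
  refine ⟨fun hw => ?_, cs.isRightInversion_of_invParity_eq_one⟩
  have hwt : cs.invParity (w * t) t = 1 + cs.invParity w t := by
    rw [invParity_mul, ht.invParity_self, show t * t * t⁻¹ = t by group]
  have hne : cs.invParity (w * t) t ≠ 1 := fun h =>
    ht.isRightInversion_mul_left_iff.1 (cs.isRightInversion_of_invParity_eq_one h) hw
  rw [hwt] at hne
  generalize cs.invParity w t = x at hne ⊢
  revert x
  decide

end SignRepresentation

theorem mem_rightInvSeq_of_isRightInversion {ω : List B} {t : W}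
    (h : cs.IsRightInversion (π ω) t) : t ∈ ris ω := by
  classical
  rw [isRightInversion_iff_invParity_eq_one _ h.1, invParity_wordProd] at h
  by_contra hmem
  simp [count_eq_zero.2 hmem] at h

theorem isRightInversion_mul_iff {a b t : W} (ht : cs.IsReflection t) :
    cs.IsRightInversion (a * b) t ↔
      (cs.IsRightInversion b t ↔ ¬cs.IsRightInversion a (b * t * b⁻¹)) := by
  classical
  rw [isRightInversion_iff_invParity_eq_one _ ht, isRightInversion_iff_invParity_eq_one _ ht,
    isRightInversion_iff_invParity_eq_one _ (ht.conj b), invParity_mul]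
  generalize cs.invParity b t = x
  generalize cs.invParity a (b * t * b⁻¹) = y
  revert x y
  decide

theorem isRightInversion_mul_of_length_mul_eq_add {a b t : W} (hab : ℓ (a * b) = ℓ a + ℓ b)
    (ht : cs.IsRightInversion b t) : cs.IsRightInversion (a * b) t := by
  obtain ⟨α, hα, rfl⟩ := cs.exists_isReduced a
  obtain ⟨β, hβ, rfl⟩ := cs.exists_isReduced b
  rw [← wordProd_append] at hab ⊢
  have hred : cs.IsReduced (α ++ β) := by
    rw [IsReduced, hab, hα.eq, hβ.eq, length_append]
  have hmem : t ∈ (ris (α ++ β)).drop α.length := by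
    rw [← rightInvSeq_drop, drop_left]
    exact cs.mem_rightInvSeq_of_isRightInversion ht
  exact cs.isRightInversion_of_mem_rightInvSeq hred (mem_of_mem_drop hmem)

theorem isRightInversion_of_forall_length_le {H : Subgroup W} {m t : W} (hm : m ∈ H)
    (hmax : ∀ u ∈ H, ℓ u ≤ ℓ m) (ht : cs.IsReflection t) (htH : t ∈ H) :
    cs.IsRightInversion m t :=
  ⟨ht, (hmax _ (mul_mem hm htH)).lt_of_ne (ht.length_mul_left_ne m)⟩

theorem mem_closure_of_isRightInversion {J : Set B} {u t : W}
    (hu : u ∈ Subgroup.closure (cs.simple '' J)) (ht : cs.IsRightInversion u t) :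
    t ∈ Subgroup.closure (cs.simple '' J) := by
  induction hu using Subgroup.closure_induction generalizing t with
  | mem _ hx =>
    obtain ⟨i, hi, rfl⟩ := hx
    have : s i * t = 1 := by simpa [length_simple] using ht.2
    rw [eq_inv_of_mul_eq_one_right this, inv_simple]
    exact Subgroup.subset_closure ⟨i, hi, rfl⟩
  | one => simpa using ht.2
  | mul a b _ hb iha ihb =>
    by_cases htb : cs.IsRightInversion b t
    · exact ihb htb
    · have hta : cs.IsRightInversion a (b * t * b⁻¹) := by
        have := (cs.isRightInversion_mul_iff ht.1).1 ht
        tauto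
      simpa [mul_assoc] using mul_mem (mul_mem (inv_mem hb) (iha hta)) hb
  | inv a ha iha =>
    have hta : cs.IsRightInversion a (a⁻¹ * t * a⁻¹⁻¹) := by
      have h1 : ¬cs.IsRightInversion (a * a⁻¹) t := by simp [IsRightInversion]
      have := cs.isRightInversion_mul_iff (a := a) (b := a⁻¹) ht.1
      tauto
    simpa [mul_assoc] using mul_mem (mul_mem ha (iha hta)) (inv_mem ha)

end CoxeterSystem

theorem parabolic_preserves_positivity_general {B W : Type*} [Group W] {M : CoxeterMatrix B}
    (cs : CoxeterSystem M W) (J : Set B)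
    (wJ : W) (hwJmem : wJ ∈ Subgroup.closure (cs.simple '' J))
    (hwJlong : ∀ u ∈ Subgroup.closure (cs.simple '' J), cs.length u ≤ cs.length wJ)
    (w : W) (hw : cs.length (w * wJ) = cs.length w + cs.length wJ)
    (t : W) (ht : cs.IsReflection t)
    (hpos : ¬ cs.IsRightInversion (wJ * w⁻¹) t) :
    ∀ y ∈ Subgroup.closure (cs.simple '' J), ¬ cs.IsRightInversion (y * w⁻¹) t := by
  intro y hy
  set r := w⁻¹ * t * w⁻¹⁻¹
  have hr : cs.IsReflection r := ht.conj w⁻¹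
  have hwJinv_long : ∀ u ∈ Subgroup.closure (cs.simple '' J), cs.length u ≤ cs.length wJ⁻¹ := by
    simpa only [cs.length_inv] using hwJlong
  have hw' : cs.length (wJ⁻¹ * w⁻¹) = cs.length wJ⁻¹ + cs.length w⁻¹ := by
    rw [← mul_inv_rev, cs.length_inv, cs.length_inv, cs.length_inv, hw, add_comm]
  have hwJ_split := cs.isRightInversion_mul_iff (a := wJ) (b := w⁻¹) ht
  have hwJinv_split := cs.isRightInversion_mul_iff (a := wJ⁻¹) (b := w⁻¹) ht
  have hy_split := cs.isRightInversion_mul_iff (a := y) (b := w⁻¹) ht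
  have hinherit := cs.isRightInversion_mul_of_length_mul_eq_add (t := t) hw'
  have hwJ_inverts := cs.isRightInversion_of_forall_length_le hwJmem hwJlong hr
  have hwJinv_inverts := cs.isRightInversion_of_forall_length_le (inv_mem hwJmem) hwJinv_long hr
  have hwJ_closure := cs.mem_closure_of_isRightInversion (t := r) hwJmem
  have hy_closure := cs.mem_closure_of_isRightInversion (t := r) hy
  tauto

/-- Let `(W,S)` be a Coxeter system, `J ⊆ S`, `W_J` the standard parabolic
subgroup generated by `J` (assumed finite) with longest element `w_J`.  For `w ∈ W` with
`ℓ(w w_J) = ℓ(w) + ℓ(w_J)`: if `α` is a positive root such that `w_J w⁻¹ (α)` is positive,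
then `y w⁻¹ (α)` is positive for every `y ∈ W_J`.

Positive roots correspond to reflections `t`, and for `v ∈ W` the root `v(α_t)` is positive
iff `t` is not a right inversion of `v`; we state positivity in these terms. -/
theorem parabolic_preserves_positivity {B W : Type*} [Group W] {M : CoxeterMatrix B}
    (cs : CoxeterSystem M W) (J : Set B)
    (hfin : (Subgroup.closure (cs.simple '' J) : Set W).Finite)
    (wJ : W) (hwJmem : wJ ∈ Subgroup.closure (cs.simple '' J))
    (hwJlong : ∀ u ∈ Subgroup.closure (cs.simple '' J), cs.length u ≤ cs.length wJ)
    (w : W) (hw : cs.length (w * wJ) = cs.length w + cs.length wJ)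
    (t : W) (ht : cs.IsReflection t)
    (hpos : ¬ cs.IsRightInversion (wJ * w⁻¹) t) :
    ∀ y ∈ Subgroup.closure (cs.simple '' J), ¬ cs.IsRightInversion (y * w⁻¹) t :=
  parabolic_preserves_positivity_general cs J wJ hwJmem hwJlong w hw t ht hpos
end

section
/- Let W be the Weyl group of type A_n with simple reflections s_1,...,s_n, and let J = {s} = {s_1} be the singleton consisting of the first simple reflection. Define Y_J = {w ∈ W : w has minimal length in wW_J and R(w w_J) = J}, where R(x) = {t ∈ S : ℓ(xt) < ℓ(x)} and w_J = s_1. Then Y_J = {e, s_2, s_3 s_2, ..., s_n s_{n-1} ⋯ s_2}. -/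
/-!
Put `x = w s₁`, so that `R(x) = {s₁}`. Every element whose right descent set lies in `{s₁}` is
one of `xₖ = sₖ ⋯ s₂ s₁` (`0 ≤ k ≤ n`), by induction on length: strip a left descent `sⱼ` off
`x`; the rest again has its descents in `{s₁}`, so it is some `xₖ`, and by the commutation and
braid relations `sⱼ xₖ` is `xₖ₊₁`, `xₖ₋₁`, or `xₖ sᵢ` with `i ≠ 1`, the last making `sᵢ` a
descent of `x`. Lengths come from the permutation representation `W → S_{n+1}`: `xₖ` sends `1`
to `k + 1` and a simple reflection moves a point up by at most one, so `ℓ(xₖ) = k`, and no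
`sᵢ` with `i ≠ 1` (these fix `1`) is a descent of `xₖ`.
-/

open Equiv

theorem Equiv.swap_mul_swap_pow_three {α : Type*} [DecidableEq α] [Fintype α] {a b c : α}
    (hab : a ≠ b) (hac : a ≠ c) (hbc : b ≠ c) : (swap a b * swap a c) ^ 3 = 1 := by
  rw [← (Perm.isThreeCycle_swap_mul_swap_same hab hac hbc).orderOf, pow_orderOf_eq_one]

theorem Equiv.swap_mul_swap_pow_two {α : Type*} [DecidableEq α] {a b c d : α}
    (h : [a, b, c, d].Nodup) : (swap a b * swap c d) ^ 2 = 1 := by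
  rw [((Perm.disjoint_swap_swap h).commute).mul_pow, pow_two, pow_two, swap_mul_self,
    swap_mul_self, one_mul]

theorem CoxeterMatrix.isLiftable_A_swap (n : ℕ) :
    (CoxeterMatrix.A n).IsLiftable fun i : Fin n => swap i.castSucc i.succ := by
  intro i j
  change (swap i.castSucc i.succ * swap j.castSucc j.succ) ^
    (if i = j then 1 else if (j : ℕ) + 1 = i ∨ (i : ℕ) + 1 = j then 3 else 2) = 1
  split_ifs with hij hadj
  · simp [hij]
  · rcases hadj with h | h
    · rw [show i.castSucc = j.succ from Fin.ext (by rw [Fin.val_castSucc, Fin.val_succ]; omega),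
        swap_comm j.castSucc]
      apply swap_mul_swap_pow_three <;>
        simp only [ne_eq, Fin.ext_iff, Fin.val_castSucc, Fin.val_succ] <;> omega
    · rw [show j.castSucc = i.succ from Fin.ext (by rw [Fin.val_castSucc, Fin.val_succ]; omega),
        swap_comm i.castSucc]
      apply swap_mul_swap_pow_three <;>
        simp only [ne_eq, Fin.ext_iff, Fin.val_castSucc, Fin.val_succ] <;> omega
  · refine swap_mul_swap_pow_two ?_
    simp only [List.nodup_cons, List.mem_cons, List.not_mem_nil, List.nodup_nil, or_false,
      not_false_eq_true, and_true, Fin.ext_iff, Fin.val_castSucc, Fin.val_succ] at hij ⊢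
    omega

theorem Fin.val_swap_castSucc_succ_apply_le {n : ℕ} (i : Fin n) (a : Fin (n + 1)) :
    (swap i.castSucc i.succ a : ℕ) ≤ a + 1 := by
  rcases eq_or_ne a i.castSucc with rfl | h₁
  · rw [swap_apply_left, Fin.val_castSucc, Fin.val_succ]
  rcases eq_or_ne a i.succ with rfl | h₂
  · rw [swap_apply_right, Fin.val_castSucc, Fin.val_succ]
    omega
  · rw [swap_apply_of_ne_of_ne h₁ h₂]
    omega

namespace CoxeterSystem

section General

variable {B W : Type*} [Group W] {M : CoxeterMatrix B}

theorem IsLeftDescent.isRightDescent_of_simple_mul {cs : CoxeterSystem M W} {w : W} {i j : B}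
    (hj : cs.IsLeftDescent w j) (hi : cs.IsRightDescent (cs.simple j * w) i) :
    cs.IsRightDescent w i := by
  have := cs.length_le_length_mul_add_left (cs.simple j) (w * cs.simple i)
  rw [cs.length_simple, ← mul_assoc] at this
  unfold IsRightDescent IsLeftDescent at *
  omega

variable (cs : CoxeterSystem M W)

theorem simple_mul_simple_comm_of_eq_two {i j : B} (h : M i j = 2) :
    cs.simple i * cs.simple j = cs.simple j * cs.simple i := by
  simpa [braidWord, h, M.symmetric j i, alternatingWord, wordProd] using
    (cs.wordProd_braidWord_eq j i).symm

theorem simple_braid_of_eq_three {i j : B} (h : M i j = 3) :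
    cs.simple i * cs.simple j * cs.simple i = cs.simple j * cs.simple i * cs.simple j := by
  simpa [braidWord, h, M.symmetric j i, alternatingWord, wordProd, mul_assoc] using
    cs.wordProd_braidWord_eq j i

end General

variable {n : ℕ} {W : Type*} [Group W] (cs : CoxeterSystem (CoxeterMatrix.A n) W)

noncomputable def permRep : W →* Equiv.Perm (Fin (n + 1)) :=
  cs.lift ⟨_, CoxeterMatrix.isLiftable_A_swap n⟩

theorem permRep_simple (i : Fin n) : cs.permRep (cs.simple i) = swap i.castSucc i.succ :=
  cs.lift_apply_simple (CoxeterMatrix.isLiftable_A_swap n) i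

theorem val_permRep_wordProd_apply_le (ω : List (Fin n)) (a : Fin (n + 1)) :
    (cs.permRep (cs.wordProd ω) a : ℕ) ≤ a + ω.length := by
  induction ω with
  | nil => simp
  | cons i ω ih =>
    rw [wordProd_cons, map_mul, permRep_simple, Equiv.Perm.mul_apply, List.length_cons]
    exact (Fin.val_swap_castSucc_succ_apply_le i _).trans (by omega)

theorem val_permRep_apply_le (w : W) (a : Fin (n + 1)) :
    (cs.permRep w a : ℕ) ≤ a + cs.length w := by
  obtain ⟨ω, hω, rfl⟩ := cs.exists_isReduced w
  rw [hω.eq]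
  exact cs.val_permRep_wordProd_apply_le ω a

/-- `s m` for `m < n`, and `1` otherwise. -/
noncomputable def simpleNat (m : ℕ) : W := if h : m < n then cs.simple ⟨m, h⟩ else 1

/-- `s (k - 1) * ⋯ * s 1 * s 0`, the element `xₖ = sₖ ⋯ s₁` in one-based notation. -/
noncomputable def descendingProd : ℕ → W
  | 0 => 1
  | k + 1 => cs.simpleNat k * descendingProd k

theorem simpleNat_of_lt {m : ℕ} (h : m < n) : cs.simpleNat m = cs.simple ⟨m, h⟩ := dif_pos h

theorem simpleNat_val (i : Fin n) : cs.simpleNat i = cs.simple i := cs.simpleNat_of_lt i.2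

theorem simpleNat_comm {a b : ℕ} (h : a + 2 ≤ b) :
    cs.simpleNat a * cs.simpleNat b = cs.simpleNat b * cs.simpleNat a := by
  by_cases hb : b < n
  · rw [cs.simpleNat_of_lt hb, cs.simpleNat_of_lt (by omega)]
    refine cs.simple_mul_simple_comm_of_eq_two ?_
    change ite _ _ _ = 2
    rw [if_neg (by rw [Fin.mk.injEq]; omega), if_neg (by dsimp only; omega)]
  · simp [simpleNat, hb]

theorem simpleNat_braid {a : ℕ} (h : a + 1 < n) :
    cs.simpleNat a * cs.simpleNat (a + 1) * cs.simpleNat a =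
      cs.simpleNat (a + 1) * cs.simpleNat a * cs.simpleNat (a + 1) := by
  rw [cs.simpleNat_of_lt h, cs.simpleNat_of_lt (by omega)]
  refine cs.simple_braid_of_eq_three ?_
  change ite _ _ _ = 3
  rw [if_neg (by simp [Fin.ext_iff]), if_pos (by simp)]

theorem descendingProd_succ (k : ℕ) :
    cs.descendingProd (k + 1) = cs.simpleNat k * cs.descendingProd k := rfl

theorem simpleNat_mul_descendingProd_of_lt {j k : ℕ} (h : k < j) :
    cs.simpleNat j * cs.descendingProd k = cs.descendingProd k * cs.simpleNat j := by
  induction k with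
  | zero => simp [descendingProd]
  | succ k ih =>
    rw [descendingProd_succ, ← mul_assoc, ← cs.simpleNat_comm (by omega), mul_assoc,
      ih (by omega), mul_assoc]

theorem simpleNat_mul_descendingProd_of_succ_lt {j k : ℕ} (h : j + 1 < k) (hk : k ≤ n) :
    cs.simpleNat j * cs.descendingProd k = cs.descendingProd k * cs.simpleNat (j + 1) := by
  induction k, h using Nat.le_induction with
  | base =>
    simp only [descendingProd_succ, ← mul_assoc]
    rw [cs.simpleNat_braid (by omega), mul_assoc _ _ (cs.descendingProd j),
      cs.simpleNat_mul_descendingProd_of_lt (Nat.lt_succ_self j), ← mul_assoc]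
  | succ k hjk ih =>
    rw [descendingProd_succ, ← mul_assoc, cs.simpleNat_comm (by omega), mul_assoc,
      ih (by omega), mul_assoc]

theorem exists_simple_mul_descendingProd_eq {j : Fin n} {k : ℕ} (hk : k ≤ n)
    (hjk : (j : ℕ) ≠ k) (hjk' : (j : ℕ) + 1 ≠ k) :
    ∃ i : Fin n, (i : ℕ) ≠ 0 ∧
      cs.simple j * cs.descendingProd k = cs.descendingProd k * cs.simple i := by
  rcases lt_or_gt_of_ne hjk with hlt | hgt
  · refine ⟨⟨j + 1, by omega⟩, by simp, ?_⟩
    rw [← cs.simpleNat_val, ← cs.simpleNat_of_lt,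
      cs.simpleNat_mul_descendingProd_of_succ_lt (by omega) hk]
  · refine ⟨j, by omega, ?_⟩
    rw [← cs.simpleNat_val, cs.simpleNat_mul_descendingProd_of_lt hgt]

theorem permRep_descendingProd_apply_zero {k : ℕ} (hk : k ≤ n) :
    cs.permRep (cs.descendingProd k) 0 = ⟨k, by omega⟩ := by
  induction k with
  | zero => simp [descendingProd]
  | succ k ih =>
    rw [descendingProd_succ, cs.simpleNat_of_lt hk, map_mul, Equiv.Perm.mul_apply,
      ih (by omega), permRep_simple]
    exact swap_apply_left (Fin.castSucc ⟨k, hk⟩) _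

theorem length_descendingProd_le (k : ℕ) : cs.length (cs.descendingProd k) ≤ k := by
  induction k with
  | zero => simp [descendingProd]
  | succ k ih =>
    have : cs.length (cs.simpleNat k) ≤ 1 := by
      unfold simpleNat
      split_ifs <;> simp
    have := cs.length_mul_le (cs.simpleNat k) (cs.descendingProd k)
    rw [descendingProd_succ]
    omega

theorem length_descendingProd {k : ℕ} (hk : k ≤ n) : cs.length (cs.descendingProd k) = k := by
  refine (cs.length_descendingProd_le k).antisymm ?_
  simpa [cs.permRep_descendingProd_apply_zero hk] using
    cs.val_permRep_apply_le (cs.descendingProd k) 0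

theorem val_eq_zero_of_isRightDescent_descendingProd {k : ℕ} (hk : k ≤ n) {i : Fin n}
    (hi : cs.IsRightDescent (cs.descendingProd k) i) : (i : ℕ) = 0 := by
  by_contra hi₀
  have hfix : swap i.castSucc i.succ 0 = 0 :=
    swap_apply_of_ne_of_ne (by simp [Fin.ext_iff, eq_comm, hi₀]) (by simp [Fin.ext_iff])
  have := cs.val_permRep_apply_le (cs.descendingProd k * cs.simple i) 0
  rw [map_mul, Equiv.Perm.mul_apply, permRep_simple, hfix,
    cs.permRep_descendingProd_apply_zero hk] at this
  unfold IsRightDescent at hi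
  rw [cs.length_descendingProd hk] at hi
  simp only [Fin.val_zero, zero_add] at this
  omega

theorem isRightDescent_descendingProd_iff {k : ℕ} (hk₀ : 0 < k) (hk : k ≤ n) (i : Fin n) :
    cs.IsRightDescent (cs.descendingProd k) i ↔ (i : ℕ) = 0 := by
  refine ⟨cs.val_eq_zero_of_isRightDescent_descendingProd hk, fun hi => ?_⟩
  have hne : cs.descendingProd k ≠ 1 := by
    intro h
    have := cs.length_descendingProd hk
    rw [h, cs.length_one] at this
    omega
  obtain ⟨i₀, hi₀⟩ := cs.exists_rightDescent_of_ne_one hne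
  rwa [show i = i₀ from Fin.ext (hi.trans
    (cs.val_eq_zero_of_isRightDescent_descendingProd hk hi₀).symm)]

theorem exists_eq_descendingProd_of_isRightDescent (x : W)
    (hx : ∀ i : Fin n, cs.IsRightDescent x i → (i : ℕ) = 0) :
    ∃ k ≤ n, x = cs.descendingProd k := by
  generalize hl : cs.length x = l
  induction l using Nat.strong_induction_on generalizing x with
  | _ l ih =>
  rcases eq_or_ne x 1 with rfl | hx1
  · exact ⟨0, Nat.zero_le n, rfl⟩
  obtain ⟨j, hj⟩ := cs.exists_leftDescent_of_ne_one hx1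
  obtain ⟨k, hk, hxk⟩ := ih _ (hl ▸ hj) (cs.simple j * x)
    (fun i hi => hx i (hj.isRightDescent_of_simple_mul hi)) rfl
  have hx' : x = cs.simple j * cs.descendingProd k := by
    rw [← hxk, simple_mul_simple_cancel_left]
  by_cases hjk : (j : ℕ) = k
  · exact ⟨k + 1, by omega, by rw [hx', descendingProd_succ, ← hjk, simpleNat_val]⟩
  by_cases hjk' : (j : ℕ) + 1 = k
  · refine ⟨j, by omega, ?_⟩
    rw [hx', ← hjk', descendingProd_succ, simpleNat_val, simple_mul_simple_cancel_left]
  obtain ⟨i, hi₀, hji⟩ := cs.exists_simple_mul_descendingProd_eq hk hjk hjk'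
  have hxi : x * cs.simple i = cs.simple j * x := by
    rw [hxk, hx', hji, simple_mul_simple_cancel_right]
  refine absurd (hx i ?_) hi₀
  show cs.length (x * cs.simple i) < cs.length x
  rwa [hxi]

theorem wordProd_ofFn_mul_simple_zero {k : ℕ} (hk : k < n) :
    cs.wordProd (List.ofFn fun j : Fin k => (⟨k - j, by omega⟩ : Fin n)) *
      cs.simple ⟨0, by omega⟩ = cs.descendingProd (k + 1) := by
  induction k with
  | zero => simp [descendingProd, cs.simpleNat_of_lt hk]
  | succ k ih =>
    rw [List.ofFn_succ, wordProd_cons, mul_assoc]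
    simp only [Fin.val_succ, Nat.add_sub_add_right, Fin.val_zero, Nat.sub_zero]
    rw [ih (by omega), cs.descendingProd_succ (k + 1), cs.simpleNat_of_lt hk]

end CoxeterSystem

/-- Let `W` be the Weyl group of type `Aₙ` with simple reflections
`s₁, …, sₙ` (here `0`-indexed: `sᵢ = cs.simple ⟨i-1, _⟩`), and let `J = {s₁}`.
Define `Y_J = {w ∈ W : w minimal in w W_J and R(w w_J) = J}`, where `R` is the right
descent set and `w_J = s₁`.  Then `Y_J = {e, s₂, s₃ s₂, …, sₙ sₙ₋₁ ⋯ s₂}`. -/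
theorem YJ_for_first_simple (n : ℕ) (hn : 0 < n) {W : Type*} [Group W]
    (cs : CoxeterSystem (CoxeterMatrix.Aₙ n) W) :
    {w : W | ¬ cs.IsRightDescent w ⟨0, hn⟩ ∧
      (∀ i : Fin n, cs.IsRightDescent (w * cs.simple ⟨0, hn⟩) i ↔ i = ⟨0, hn⟩)} =
    {w : W | ∃ k : ℕ, ∃ hk : k ≤ n - 1,
      w = cs.wordProd (List.ofFn fun j : Fin k => (⟨k - (j : ℕ), by omega⟩ : Fin n))} := by
  ext w
  constructor
  · rintro ⟨-, hdesc⟩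
    obtain ⟨k, hk, hw⟩ := cs.exists_eq_descendingProd_of_isRightDescent (w * cs.simple ⟨0, hn⟩)
      fun i hi => Fin.ext_iff.mp ((hdesc i).mp hi)
    rcases k with _ | k
    · have h := (hdesc ⟨0, hn⟩).mpr rfl
      rw [hw] at h
      exact absurd h (cs.not_isRightDescent_one _)
    · exact ⟨k, by omega, mul_right_cancel (hw.trans (cs.wordProd_ofFn_mul_simple_zero hk).symm)⟩
  · rintro ⟨k, hk, rfl⟩
    -- restated over the alias `Aₙ` of the statement, so that `rw` finds it in the goal
    have hw : cs.wordProd (List.ofFn fun j : Fin k => (⟨k - (j : ℕ), by omega⟩ : Fin n)) *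
        cs.simple ⟨0, hn⟩ = cs.descendingProd (k + 1) :=
      cs.wordProd_ofFn_mul_simple_zero (by omega)
    have hdesc (i : Fin n) := cs.isRightDescent_descendingProd_iff k.succ_pos (by omega) i
    refine ⟨?_, fun i => ?_⟩
    · rw [cs.isRightDescent_iff_not_isRightDescent_mul, not_not, hw]
      exact (hdesc _).mpr rfl
    · rw [hw]
      exact (hdesc i).trans (by simp [Fin.ext_iff])
end
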